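/- For all 1 ≤ i,j ≤ n and all k,l ∈ ℤ, the Drinfeld quadratic relation holds in M_{n+1}(R): x_i⁺(k+1)·x_j⁺(l) − q^{(α_i|α_j)}·x_j⁺(l)·x_i⁺(k+1) = q^{(α_i|α_j)}·x_i⁺(k)·x_j⁺(l+1) − x_j⁺(l+1)·x_i⁺(k). -/
import Mathlib


noncomputable section

open LaurentPolynomial

/-- The base field `F = ℚ(q)`. -/
abbrev F : Type := RatFunc ℚ

/-- The Laurent polynomial ring `R = F[z, z⁻¹]`. -/
abbrev R : Type := LaurentPolynomial F

/-- The generator `q` of `ℚ(q)`. -/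
def q : F := RatFunc.X

/-- The quantum integer `[m] = (q^m − q^{−m})/(q − q^{−1})`. -/
def qint (m : ℤ) : F := (q ^ m - q ^ (-m)) / (q - q⁻¹)

/-- The A_n inner product `(α_i|α_j)` on simple roots (1-based indices). -/
def ip (i j : ℕ) : ℤ := if i = j then 2 else if i + 1 = j ∨ j + 1 = i then -1 else 0

/-- The matrix unit `E_{ab} ∈ M_N(R)`, with 1-based labels `a b`. -/
def E (N a b : ℕ) : Matrix (Fin N) (Fin N) R :=
  Matrix.of fun r s => if (r : ℕ) + 1 = a ∧ (s : ℕ) + 1 = b then (1 : R) else 0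

/-- The element `(q^c z)^k ∈ R`. -/
def zq (c k : ℤ) : R := C (q ^ (c * k)) * T k

/-- `x_j⁺(k) = (q^j z)^k E_{j,j+1}` in `M_{n+1}(R)`. -/
def xp (n j : ℕ) (k : ℤ) : Matrix (Fin (n+1)) (Fin (n+1)) R :=
  zq j k • E (n+1) j (j+1)

/-- `x_j⁻(k) = (q^j z)^k E_{j+1,j}` in `M_{n+1}(R)`. -/
def xm (n j : ℕ) (k : ℤ) : Matrix (Fin (n+1)) (Fin (n+1)) R :=
  zq j k • E (n+1) (j+1) j

/-- `a_j(l) = ([l]/l)(q^j z)^l (q^{−l}E_{j,j} − q^l E_{j+1,j+1})` in `M_{n+1}(R)`. -/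
def aop (n j : ℕ) (l : ℤ) : Matrix (Fin (n+1)) (Fin (n+1)) R :=
  (C (qint l / (l : F)) * zq j l) •
    (C (q ^ (-l)) • E (n+1) j j - C (q ^ l) • E (n+1) (j+1) (j+1))

lemma hq : q ≠ 0 := RatFunc.X_ne_zero

lemma zq_mul (c d k l : ℤ) : zq c k * zq d l = C (q ^ (c*k + d*l)) * T (k + l) := by
  unfold zq
  rw [zpow_add₀ hq, map_mul, T_add]
  ring

lemma E_mul_ne (N a b c d : ℕ) (h : b ≠ c) : E N a b * E N c d = 0 := by
  apply Matrix.ext; intro r s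
  simp only [Matrix.mul_apply, E, Matrix.of_apply, Matrix.zero_apply]
  apply Finset.sum_eq_zero
  intro t _
  split_ifs with h1 h2 <;> simp_all

lemma E_mul_eq (N a b d : ℕ) (hb1 : 1 ≤ b) (hbN : b ≤ N) :
    E N a b * E N b d = E N a d := by
  apply Matrix.ext; intro r s
  simp only [Matrix.mul_apply, E, Matrix.of_apply]
  rw [Finset.sum_eq_single (⟨b - 1, by omega⟩ : Fin N)]
  · have hb : ((⟨b - 1, by omega⟩ : Fin N) : ℕ) + 1 = b := by simp; omega
    by_cases h1 : (r:ℕ)+1 = a <;> by_cases h2 : (s:ℕ)+1 = d <;> simp [hb, h1, h2]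
  · intro t _ ht
    have hb : (t:ℕ) + 1 ≠ b := fun hb => ht (Fin.ext (by simp; omega))
    simp [hb]
  · simp


/-- the Drinfeld quadratic relation
`x_i⁺(k+1)x_j⁺(l) − q^{(α_i|α_j)} x_j⁺(l)x_i⁺(k+1)
  = q^{(α_i|α_j)} x_i⁺(k)x_j⁺(l+1) − x_j⁺(l+1)x_i⁺(k)` in `M_{n+1}(R)`. -/
theorem drinfeld_quadratic (n : ℕ) (hn : 1 ≤ n) (i j : ℕ) (hi1 : 1 ≤ i)
    (hin : i ≤ n) (hj1 : 1 ≤ j) (hjn : j ≤ n) (k l : ℤ) :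
    xp n i (k + 1) * xp n j l - C (q ^ ip i j) • (xp n j l * xp n i (k + 1)) =
      C (q ^ ip i j) • (xp n i k * xp n j (l + 1)) - xp n j (l + 1) * xp n i k := by
  unfold xp
  rw [smul_mul_smul_comm, smul_mul_smul_comm, smul_mul_smul_comm, smul_mul_smul_comm]
  by_cases hij : i = j
  · subst hij
    rw [E_mul_ne _ _ _ _ _ (by omega)]
    simp
  by_cases h1 : j = i + 1
  · subst h1
    have hip : ip i (i+1) = -1 := by simp [ip]
    rw [E_mul_eq (n+1) i (i+1) (i+1+1) (by omega) (by omega),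
        E_mul_ne _ _ _ _ _ (by omega : i+1+1 ≠ i), hip]
    simp only [smul_zero, sub_zero]
    rw [smul_smul]
    congr 1
    have e1 : (↑i:ℤ)*(k+1) + (↑(i+1):ℤ)*l = -1 + ((↑i:ℤ)*k + (↑(i+1):ℤ)*(l+1)) := by
      push_cast; ring
    have e2 : k + 1 + l = k + (l + 1) := by ring
    rw [zq_mul, zq_mul, ← mul_assoc, ← map_mul, ← zpow_add₀ hq, e1, e2]
  by_cases h2 : i = j + 1
  · subst h2
    have hip : ip (j+1) j = -1 := by simp [ip]
    rw [E_mul_ne _ _ _ _ _ (by omega : j+1+1 ≠ j),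
        E_mul_eq (n+1) j (j+1) (j+1+1) (by omega) (by omega), hip]
    simp only [smul_zero, zero_sub, sub_zero]
    rw [smul_smul, neg_inj]
    congr 1
    have e1 : -1 + ((↑j:ℤ)*l + (↑(j+1):ℤ)*(k+1)) = (↑j:ℤ)*(l+1) + (↑(j+1):ℤ)*k := by
      push_cast; ring
    have e2 : l + (k + 1) = l + 1 + k := by ring
    rw [zq_mul, zq_mul, ← mul_assoc, ← map_mul, ← zpow_add₀ hq, e1, e2]
  · rw [E_mul_ne _ _ _ _ _ (by omega), E_mul_ne _ _ _ _ _ (by omega)]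
    simp
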